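/- Let 0 < β₂ < 1 and (g_t)_{t≥1} real numbers. Define v_t = β₂ v_{t-1} + (1-β₂) g_t² with v₀ = 0. Then ∑_{t=1}^T g_t² / (√(v_t) · √t) ≤ (2/√(1-β₂)) √((1+\log T) ∑_{t=1}^T g_t²) whenever all v_t > 0. -/

import Mathlib

/-!
Since `v` stays nonnegative, `v_t ≥ (1 - β₂) g_t²`, so the `t`-th term is at most
`|g_t| / (√(1 - β₂) √t)`. Cauchy–Schwarz against the weights `1 / √t`, whose squares sum to the
harmonic number `H_T ≤ 1 + log T`, bounds the remaining sum by `√((1 + log T) ∑ g_t²)`.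
-/

open Finset Real

theorem sum_Icc_inv_le_one_add_log (T : ℕ) :
    ∑ t ∈ Icc 1 T, (t : ℝ)⁻¹ ≤ 1 + log T := by
  simpa only [harmonic_eq_sum_Icc, Rat.cast_sum, Rat.cast_inv, Rat.cast_natCast]
    using harmonic_le_one_add_log T

theorem sum_abs_div_sqrt_le_sqrt_one_add_log_mul (a : ℕ → ℝ) (T : ℕ) :
    ∑ t ∈ Icc 1 T, |a t| / √t ≤ √((1 + log T) * ∑ t ∈ Icc 1 T, a t ^ 2) := by
  calc ∑ t ∈ Icc 1 T, |a t| / √t = ∑ t ∈ Icc 1 T, √(a t ^ 2) * √((t : ℝ)⁻¹) := by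
        simp only [sqrt_sq_eq_abs, sqrt_inv, div_eq_mul_inv]
    _ ≤ √(∑ t ∈ Icc 1 T, a t ^ 2) * √(∑ t ∈ Icc 1 T, (t : ℝ)⁻¹) :=
        sum_sqrt_mul_sqrt_le _ (fun t ↦ sq_nonneg (a t)) (fun t ↦ inv_nonneg.2 t.cast_nonneg)
    _ ≤ √(∑ t ∈ Icc 1 T, a t ^ 2) * √(1 + log T) := by
        gcongr; exact sum_Icc_inv_le_one_add_log T
    _ = √((1 + log T) * ∑ t ∈ Icc 1 T, a t ^ 2) := by
        rw [mul_comm, sqrt_mul (by linarith [log_natCast_nonneg T])]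

theorem sq_div_sqrt_le_abs_div_sqrt {c x y : ℝ} (hc : 0 < c) (h : c * x ^ 2 ≤ y) :
    x ^ 2 / √y ≤ |x| / √c := by
  have hcx : √c * |x| ≤ √y := by
    simpa only [sqrt_mul hc.le, sqrt_sq_eq_abs] using sqrt_le_sqrt h
  rcases (abs_nonneg x).eq_or_lt with hx | hx
  · simp [abs_eq_zero.1 hx.symm]
  have hy : 0 < √y := (mul_pos (sqrt_pos.2 hc) hx).trans_le hcx
  rw [div_le_div_iff₀ hy (sqrt_pos.2 hc), ← sq_abs, sq]
  nlinarith

theorem ema_sq_nonneg {β : ℝ} (hβ : 0 ≤ β) (hβ1 : β ≤ 1) {g v : ℕ → ℝ} (hv0 : 0 ≤ v 0)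
    (hv : ∀ t, 1 ≤ t → v t = β * v (t - 1) + (1 - β) * g t ^ 2) (t : ℕ) : 0 ≤ v t := by
  induction t with
  | zero => exact hv0
  | succ n ih =>
    rw [hv (n + 1) n.succ_pos, Nat.add_sub_cancel]
    have : 0 ≤ 1 - β := by linarith
    positivity

theorem adal_second_moment_sum_bound_general (T : ℕ)
    (β₂ : ℝ) (hβ₂ : 0 < β₂) (hβ₂1 : β₂ < 1)
    (g v : ℕ → ℝ) (hv0 : v 0 = 0)
    (hv : ∀ t, 1 ≤ t → v t = β₂ * v (t - 1) + (1 - β₂) * (g t) ^ 2) :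
    ∑ t ∈ Finset.Icc 1 T, (g t) ^ 2 / (Real.sqrt (v t) * Real.sqrt t) ≤
      (2 / Real.sqrt (1 - β₂)) *
        Real.sqrt ((1 + Real.log T) * ∑ t ∈ Finset.Icc 1 T, (g t) ^ 2) := by
  have hβ : 0 < 1 - β₂ := by linarith
  have hv_ge : ∀ t ∈ Icc 1 T, (1 - β₂) * g t ^ 2 ≤ v t := fun t ht ↦ by
    rw [hv t (mem_Icc.1 ht).1]
    linarith [mul_nonneg hβ₂.le (ema_sq_nonneg hβ₂.le hβ₂1.le hv0.ge hv (t - 1))]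
  calc ∑ t ∈ Icc 1 T, g t ^ 2 / (√(v t) * √t)
      ≤ ∑ t ∈ Icc 1 T, |g t| / √(1 - β₂) / √t := sum_le_sum fun t ht ↦ by
        rw [← div_div]
        exact div_le_div_of_nonneg_right (sq_div_sqrt_le_abs_div_sqrt hβ (hv_ge t ht))
          (sqrt_nonneg _)
    _ = (∑ t ∈ Icc 1 T, |g t| / √t) / √(1 - β₂) := by
        rw [sum_div]; exact sum_congr rfl fun _ _ ↦ div_right_comm _ _ _
    _ ≤ √((1 + log T) * ∑ t ∈ Icc 1 T, g t ^ 2) / √(1 - β₂) := by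
        gcongr; exact sum_abs_div_sqrt_le_sqrt_one_add_log_mul g T
    _ ≤ 2 / √(1 - β₂) * √((1 + log T) * ∑ t ∈ Icc 1 T, g t ^ 2) := by
        rw [div_mul_eq_mul_div]
        gcongr
        exact le_mul_of_one_le_left (sqrt_nonneg _) one_le_two

/-- Bound on `∑ g_t² / (√v_t √t)` for the exponential moving average
`v_t = β₂ v_{t-1} + (1-β₂) g_t²`, `v₀ = 0`. -/
theorem adal_second_moment_sum_bound (T : ℕ) (hT : 0 < T)
    (β₂ : ℝ) (hβ₂ : 0 < β₂) (hβ₂1 : β₂ < 1)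
    (g v : ℕ → ℝ) (hv0 : v 0 = 0)
    (hv : ∀ t, 1 ≤ t → v t = β₂ * v (t - 1) + (1 - β₂) * (g t) ^ 2)
    (hvpos : ∀ t ∈ Finset.Icc 1 T, 0 < v t) :
    ∑ t ∈ Finset.Icc 1 T, (g t) ^ 2 / (Real.sqrt (v t) * Real.sqrt t) ≤
      (2 / Real.sqrt (1 - β₂)) *
        Real.sqrt ((1 + Real.log T) * ∑ t ∈ Finset.Icc 1 T, (g t) ^ 2) :=
  adal_second_moment_sum_bound_general T β₂ hβ₂ hβ₂1 g v hv0 hv
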